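/- Let α ∈ (0,1] and let μ be a probability distribution on the k-element subsets of [n]. Suppose that for every external field λ = (λ₁,…,λₙ) ∈ ℝ^n_{>0}, the distribution λ ∗ μ is (1/α)-entropically independent, i.e., for every probability distribution ν with supp(ν) ⊆ supp(λ ∗ μ), D(ν D_{k→1} ‖ (λ ∗ μ) D_{k→1}) ≤ (1/(αk))·D(ν ‖ λ ∗ μ). Then μ is α-fractionally log-concave: (z₁,…,zₙ) ↦ log g_μ(z₁^α,…,zₙ^α) is concave on the positive orthant ℝ^n_{>0}. -/

import Mathlib

open Finset

/-- The generating polynomial `g_μ(z) = ∑_S μ(S) ∏_{i∈S} z_i`. -/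
noncomputable def genPoly {n : ℕ} (μ : Finset (Fin n) → ℝ) (z : Fin n → ℝ) : ℝ :=
  ∑ S : Finset (Fin n), μ S * ∏ i ∈ S, z i

/-- The external field `λ ∗ μ`, with `(λ ∗ μ)(S) ∝ μ(S) ∏_{i∈S} λ_i`. -/
noncomputable def extField {n : ℕ} (μ : Finset (Fin n) → ℝ) (lam : Fin n → ℝ)
    (S : Finset (Fin n)) : ℝ :=
  μ S * (∏ i ∈ S, lam i) / (∑ T : Finset (Fin n), μ T * ∏ i ∈ T, lam i)

/-- The `k → 1` down operator: `(ν D_{k→1})(i) = (1/k) ∑_{S ∋ i} ν(S)`. -/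
noncomputable def down1 {n : ℕ} (k : ℕ) (ν : Finset (Fin n) → ℝ) (i : Fin n) : ℝ :=
  (1 / (k : ℝ)) * ∑ S ∈ Finset.univ.filter (fun S => i ∈ S), ν S

/-- KL divergence `D(ν ‖ μ) = ∑_x ν(x) log (ν(x)/μ(x))` on a finite type. -/
noncomputable def KLdiv {X : Type*} [Fintype X] (ν μ : X → ℝ) : ℝ :=
  ∑ x : X, ν x * Real.log (ν x / μ x)

/-!
Write `F(z) = log g_μ(z^α)` and fix `l` in the positive orthant. For another point `z`, the KL
divergence between the two external fields `ν = z^α ∗ μ` and `m = l^α ∗ μ` is explicit: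
`D(ν ‖ m) = α k ∑ᵢ p_i log(z_i / l_i) + F(l) - F(z)`, where `p = ν D_{k→1}`. Entropic
independence of `m` bounds `α k D(p ‖ q)` by this, with `q = m D_{k→1}`, and the Gibbs-type
inequality `∑ p_i log r_i - D(p ‖ q) ≤ ∑ q_i r_i - 1` with `r = z / l` turns it into
`F(z) ≤ F(l) + α k ∑ᵢ q_i (z_i - l_i) / l_i`. So `F` lies below an affine function touching it
at every point of the orthant, hence is concave.
-/

open Real

theorem concaveOn_of_forall_le_add_linearMap {E : Type*} [AddCommGroup E] [Module ℝ E]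
    {s : Set E} {f : E → ℝ} (hs : Convex ℝ s)
    (h : ∀ x ∈ s, ∃ L : E →ₗ[ℝ] ℝ, ∀ y ∈ s, f y ≤ f x + L (y - x)) :
    ConcaveOn ℝ s f := by
  refine ⟨hs, fun x hx y hy a b ha hb hab => ?_⟩
  set m := a • x + b • y
  obtain ⟨L, hL⟩ := h m (hs hx hy ha hb hab)
  have hsum : a • (x - m) + b • (y - m) = 0 := by
    rw [smul_sub, smul_sub, sub_add_sub_comm, ← add_smul, hab, one_smul, sub_self]
  have hL0 : a * L (x - m) + b * L (y - m) = 0 := by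
    simpa only [map_add, map_smul, smul_eq_mul, map_zero] using congrArg L hsum
  have hfm : f m = a * f m + b * f m := by rw [← add_mul, hab, one_mul]
  have hx' := mul_le_mul_of_nonneg_left (hL x hx) ha
  have hy' := mul_le_mul_of_nonneg_left (hL y hy) hb
  simp only [smul_eq_mul]
  linarith

theorem convex_setOf_forall_pos (ι : Type*) : Convex ℝ {z : ι → ℝ | ∀ i, 0 < z i} := by
  simpa [Set.pi] using convex_pi (s := Set.univ) fun (_ : ι) _ => convex_Ioi (0 : ℝ)

theorem mul_log_sub_mul_log_div_le {p q r : ℝ} (hp : 0 ≤ p) (hq : 0 ≤ q) (hpq : q = 0 → p = 0)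
    (hr : 0 < r) : p * log r - p * log (p / q) ≤ q * r - p := by
  rcases hp.eq_or_lt with rfl | hp
  · simpa using mul_nonneg hq hr.le
  have hq : 0 < q := hq.lt_of_ne fun h => hp.ne' (hpq h.symm)
  calc p * log r - p * log (p / q) = p * log (r * q / p) := by
        rw [mul_div_assoc, log_mul hr.ne' (by positivity), log_div hq.ne' hp.ne',
          log_div hp.ne' hq.ne']
        ring
    _ ≤ p * (r * q / p - 1) :=
        mul_le_mul_of_nonneg_left (log_le_sub_one_of_pos (by positivity)) hp.le
    _ = q * r - p := by field_simp

theorem sum_mul_log_sub_KLdiv_le {X : Type*} [Fintype X] {p q r : X → ℝ} (hp : ∀ x, 0 ≤ p x)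
    (hq : ∀ x, 0 ≤ q x) (hpq : ∀ x, q x = 0 → p x = 0) (hr : ∀ x, 0 < r x) :
    ∑ x, p x * log (r x) - KLdiv p q ≤ ∑ x, q x * r x - ∑ x, p x := by
  rw [KLdiv, ← sum_sub_distrib, ← sum_sub_distrib]
  exact sum_le_sum fun x _ => mul_log_sub_mul_log_div_le (hp x) (hq x) (hpq x) (hr x)

section Distributions

variable {n : ℕ}

theorem genPoly_pos {μ : Finset (Fin n) → ℝ} (hμ0 : ∀ S, 0 ≤ μ S) (hμ1 : ∑ S, μ S = 1)
    {w : Fin n → ℝ} (hw : ∀ i, 0 < w i) : 0 < genPoly μ w := by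
  obtain ⟨S₀, -, hS₀⟩ := exists_ne_zero_of_sum_ne_zero (f := μ) (by rw [hμ1]; exact one_ne_zero)
  refine sum_pos' (fun S _ => mul_nonneg (hμ0 S) (prod_nonneg fun i _ => (hw i).le))
    ⟨S₀, mem_univ _, mul_pos ((hμ0 S₀).lt_of_ne' hS₀) (prod_pos fun i _ => hw i)⟩

theorem genPoly_eq_one_of_card_eq_zero {μ : Finset (Fin n) → ℝ}
    (hμk : ∀ S, μ S ≠ 0 → S.card = 0) (hμ1 : ∑ S, μ S = 1) (z : Fin n → ℝ) :
    genPoly μ z = 1 := by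
  rw [← hμ1, genPoly]
  refine sum_congr rfl fun S _ => ?_
  by_cases hS : μ S = 0
  · rw [hS, zero_mul]
  · rw [card_eq_zero.mp (hμk S hS), prod_empty, mul_one]

theorem extField_eq (μ : Finset (Fin n) → ℝ) (lam : Fin n → ℝ) (S : Finset (Fin n)) :
    extField μ lam S = μ S * (∏ i ∈ S, lam i) / genPoly μ lam :=
  rfl

variable {μ : Finset (Fin n) → ℝ} (hμ0 : ∀ S, 0 ≤ μ S) (hμ1 : ∑ S, μ S = 1)
  {w : Fin n → ℝ} (hw : ∀ i, 0 < w i)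
include hμ0 hμ1 hw

theorem extField_nonneg (S : Finset (Fin n)) : 0 ≤ extField μ w S :=
  div_nonneg (mul_nonneg (hμ0 S) (prod_nonneg fun i _ => (hw i).le)) (genPoly_pos hμ0 hμ1 hw).le

theorem extField_eq_zero_iff (S : Finset (Fin n)) : extField μ w S = 0 ↔ μ S = 0 := by
  rw [extField_eq, div_eq_zero_iff, mul_eq_zero, or_iff_left (prod_pos fun i _ => hw i).ne',
    or_iff_left (genPoly_pos hμ0 hμ1 hw).ne']

theorem sum_extField : ∑ S, extField μ w S = 1 := by
  simp only [extField_eq, ← sum_div]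
  exact div_self (genPoly_pos hμ0 hμ1 hw).ne'

end Distributions

section Down

variable {n : ℕ} {k : ℕ}

theorem down1_nonneg {ν : Finset (Fin n) → ℝ} (hν : ∀ S, 0 ≤ ν S) (i : Fin n) :
    0 ≤ down1 k ν i :=
  mul_nonneg (by positivity) (sum_nonneg fun S _ => hν S)

theorem sum_down1_mul (ν : Finset (Fin n) → ℝ) (f : Fin n → ℝ) :
    ∑ i, down1 k ν i * f i = (1 / (k : ℝ)) * ∑ S, ν S * ∑ i ∈ S, f i := by
  simp only [down1, mul_assoc, ← mul_sum, sum_mul, sum_filter]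
  rw [sum_comm]
  simp only [ite_mul, zero_mul, sum_ite_mem, univ_inter, mul_sum]

theorem sum_mul_sum_eq_mul_sum_down1 (hk : k ≠ 0) (ν : Finset (Fin n) → ℝ) (f : Fin n → ℝ) :
    ∑ S, ν S * ∑ i ∈ S, f i = k * ∑ i, down1 k ν i * f i := by
  rw [sum_down1_mul, ← mul_assoc, mul_one_div_cancel (Nat.cast_ne_zero.mpr hk), one_mul]

theorem sum_down1 (hk : k ≠ 0) {ν : Finset (Fin n) → ℝ} (hν : ∀ S, ν S ≠ 0 → S.card = k) :
    ∑ i, down1 k ν i = ∑ S, ν S := by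
  have hcard : ∀ S, ν S * ∑ i ∈ S, (1 : ℝ) = k * ν S := fun S => by
    by_cases hS : ν S = 0
    · rw [hS, zero_mul, mul_zero]
    · rw [sum_const, hν S hS, nsmul_eq_mul, mul_one, mul_comm]
  have h := sum_mul_sum_eq_mul_sum_down1 hk ν fun _ => 1
  simp only [hcard, ← mul_sum, mul_one] at h
  exact (mul_left_cancel₀ (Nat.cast_ne_zero.mpr hk) h).symm

theorem down1_eq_zero_of_support_subset {ν m : Finset (Fin n) → ℝ} (hm : ∀ S, 0 ≤ m S)
    (hνm : ∀ S, m S = 0 → ν S = 0) {i : Fin n} (hi : down1 k m i = 0) : down1 k ν i = 0 := by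
  rw [down1, mul_eq_zero, sum_eq_zero_iff_of_nonneg fun S _ => hm S] at hi
  rcases hi with hk | hm0
  · rw [down1, hk, zero_mul]
  · rw [down1, sum_eq_zero fun S hS => hνm S (hm0 S hS), mul_zero]

end Down

section ExternalField

variable {n : ℕ} {μ : Finset (Fin n) → ℝ} (hμ0 : ∀ S, 0 ≤ μ S) (hμ1 : ∑ S, μ S = 1)
  {u w : Fin n → ℝ} (hu : ∀ i, 0 < u i) (hw : ∀ i, 0 < w i)
include hμ0 hμ1 hu hw

theorem log_extField_div_extField {S : Finset (Fin n)} (hS : μ S ≠ 0) :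
    log (extField μ u S / extField μ w S)
      = ∑ i ∈ S, log (u i / w i) + (log (genPoly μ w) - log (genPoly μ u)) := by
  have hgu := genPoly_pos hμ0 hμ1 hu
  have hgw := genPoly_pos hμ0 hμ1 hw
  calc log (extField μ u S / extField μ w S)
      = log ((∏ i ∈ S, u i / w i) * (genPoly μ w / genPoly μ u)) := by
        rw [extField_eq, extField_eq, prod_div_distrib]
        field_simp
    _ = _ := by
        rw [log_mul (prod_pos fun i _ => div_pos (hu i) (hw i)).ne' (div_pos hgw hgu).ne',
          log_prod fun i _ => (div_pos (hu i) (hw i)).ne', log_div hgw.ne' hgu.ne']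

theorem KLdiv_extField {k : ℕ} (hk : k ≠ 0) :
    KLdiv (extField μ u) (extField μ w)
      = k * ∑ i, down1 k (extField μ u) i * log (u i / w i)
        + (log (genPoly μ w) - log (genPoly μ u)) := by
  set C := log (genPoly μ w) - log (genPoly μ u)
  have hterm : ∀ S, extField μ u S * log (extField μ u S / extField μ w S)
      = extField μ u S * ∑ i ∈ S, log (u i / w i) + extField μ u S * C := fun S => by
    by_cases hS : μ S = 0
    · rw [(extField_eq_zero_iff hμ0 hμ1 hu S).2 hS]
      ring
    · rw [log_extField_div_extField hμ0 hμ1 hu hw hS, mul_add]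
  rw [KLdiv, sum_congr rfl fun S _ => hterm S, sum_add_distrib, ← sum_mul,
    sum_extField hμ0 hμ1 hu, one_mul, sum_mul_sum_eq_mul_sum_down1 hk]

end ExternalField

-- `IsEntropicallyIndependent k α m` says that `m` is `(1/α)`-entropically independent.
def IsEntropicallyIndependent {n : ℕ} (k : ℕ) (α : ℝ) (m : Finset (Fin n) → ℝ) : Prop :=
  ∀ ν : Finset (Fin n) → ℝ, (∀ S, 0 ≤ ν S) → (∀ S, ν S ≠ 0 → S.card = k) →
    (∑ S : Finset (Fin n), ν S = 1) → (∀ S, m S = 0 → ν S = 0) →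
    KLdiv (down1 k ν) (down1 k m) ≤ (1 / (α * (k : ℝ))) * KLdiv ν m

theorem log_genPoly_rpow_le {n k : ℕ} (hk : k ≠ 0) {α : ℝ} (hα : 0 < α)
    {μ : Finset (Fin n) → ℝ} (hμ0 : ∀ S, 0 ≤ μ S) (hμk : ∀ S, μ S ≠ 0 → S.card = k)
    (hμ1 : ∑ S, μ S = 1) {l z : Fin n → ℝ} (hl : ∀ i, 0 < l i) (hz : ∀ i, 0 < z i)
    (hEI : IsEntropicallyIndependent k α (extField μ fun i => l i ^ α)) :
    log (genPoly μ fun i => z i ^ α) ≤ log (genPoly μ fun i => l i ^ α)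
      + α * k * ∑ i, down1 k (extField μ fun i => l i ^ α) i * ((z i - l i) / l i) := by
  set w : Fin n → ℝ := fun i => l i ^ α
  set u : Fin n → ℝ := fun i => z i ^ α
  have hw : ∀ i, 0 < w i := fun i => rpow_pos_of_pos (hl i) α
  have hu : ∀ i, 0 < u i := fun i => rpow_pos_of_pos (hz i) α
  set m := extField μ w
  set ν := extField μ u
  set p := down1 k ν
  set q := down1 k m
  have hνm : ∀ S, m S = 0 → ν S = 0 := fun S h =>
    (extField_eq_zero_iff hμ0 hμ1 hu S).2 ((extField_eq_zero_iff hμ0 hμ1 hw S).1 h)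
  have hcard : ∀ {v : Fin n → ℝ}, (∀ i, 0 < v i) → ∀ S, extField μ v S ≠ 0 → S.card = k :=
    fun hv S hS => hμk S fun h => hS ((extField_eq_zero_iff hμ0 hμ1 hv S).2 h)
  have hp1 : ∑ i, p i = 1 := (sum_down1 hk (hcard hu)).trans (sum_extField hμ0 hμ1 hu)
  have hq1 : ∑ i, q i = 1 := (sum_down1 hk (hcard hw)).trans (sum_extField hμ0 hμ1 hw)
  have hKL : KLdiv ν m = α * k * ∑ i, p i * log (z i / l i)
      + (log (genPoly μ w) - log (genPoly μ u)) := by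
    have hlog : ∀ i, log (u i / w i) = α * log (z i / l i) := fun i => by
      rw [← div_rpow (hz i).le (hl i).le, log_rpow (div_pos (hz i) (hl i))]
    rw [KLdiv_extField hμ0 hμ1 hu hw hk]
    simp only [hlog, mul_left_comm _ α, ← mul_sum]
    ring
  have hEI' : α * k * KLdiv p q ≤ KLdiv ν m := by
    have h := hEI ν (extField_nonneg hμ0 hμ1 hu) (hcard hu) (sum_extField hμ0 hμ1 hu) hνm
    rwa [one_div_mul_eq_div, le_div_iff₀' (by positivity)] at h
  have hGibbs := sum_mul_log_sub_KLdiv_le (p := p) (q := q) (r := fun i => z i / l i)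
    (down1_nonneg (extField_nonneg hμ0 hμ1 hu)) (down1_nonneg (extField_nonneg hμ0 hμ1 hw))
    (fun i => down1_eq_zero_of_support_subset (extField_nonneg hμ0 hμ1 hw) hνm)
    (fun i => div_pos (hz i) (hl i))
  have hlin : ∑ i, q i * (z i / l i) - ∑ i, p i = ∑ i, q i * ((z i - l i) / l i) := by
    rw [hp1, ← hq1, ← sum_sub_distrib]
    refine sum_congr rfl fun i _ => ?_
    field_simp [(hl i).ne']
  calc log (genPoly μ u)
      ≤ log (genPoly μ w) + α * k * (∑ i, p i * log (z i / l i) - KLdiv p q) := by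
        linarith
    _ ≤ log (genPoly μ w) + α * k * (∑ i, q i * (z i / l i) - ∑ i, p i) := by gcongr
    _ = _ := by rw [hlin]

theorem stmt_3_general (n k : ℕ) (α : ℝ) (hα0 : 0 < α)
    (μ : Finset (Fin n) → ℝ)
    (hμ0 : ∀ S, 0 ≤ μ S)
    (hμk : ∀ S, μ S ≠ 0 → S.card = k)
    (hμ1 : ∑ S : Finset (Fin n), μ S = 1)
    (hEI : ∀ lam : Fin n → ℝ, (∀ i, 0 < lam i) →
      ∀ ν : Finset (Fin n) → ℝ,
        (∀ S, 0 ≤ ν S) → (∀ S, ν S ≠ 0 → S.card = k) →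
        (∑ S : Finset (Fin n), ν S = 1) →
        (∀ S, extField μ lam S = 0 → ν S = 0) →
        KLdiv (down1 k ν) (down1 k (extField μ lam)) ≤
          (1 / (α * (k : ℝ))) * KLdiv ν (extField μ lam)) :
    ConcaveOn ℝ {z : Fin n → ℝ | ∀ i, 0 < z i}
      (fun z => Real.log (genPoly μ (fun i => z i ^ α))) := by
  rcases eq_or_ne k 0 with rfl | hk
  · simp only [genPoly_eq_one_of_card_eq_zero hμk hμ1, log_one]
    exact concaveOn_const 0 (convex_setOf_forall_pos (Fin n))
  refine concaveOn_of_forall_le_add_linearMap (convex_setOf_forall_pos (Fin n)) fun l hl => ?_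
  set q := down1 k (extField μ fun i => l i ^ α)
  refine ⟨Fintype.linearCombination ℝ fun i => α * k * q i / l i, fun z hz => ?_⟩
  have h := log_genPoly_rpow_le hk hα0 hμ0 hμk hμ1 hl hz (hEI _ fun i => rpow_pos_of_pos (hl i) α)
  convert h using 2
  simp only [Fintype.linearCombination_apply, mul_sum, Pi.sub_apply, smul_eq_mul]
  exact sum_congr rfl fun i _ => by ring

theorem stmt_3 (n k : ℕ) (α : ℝ) (hα0 : 0 < α) (hα1 : α ≤ 1)
    (μ : Finset (Fin n) → ℝ)
    (hμ0 : ∀ S, 0 ≤ μ S)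
    (hμk : ∀ S, μ S ≠ 0 → S.card = k)
    (hμ1 : ∑ S : Finset (Fin n), μ S = 1)
    (hEI : ∀ lam : Fin n → ℝ, (∀ i, 0 < lam i) →
      ∀ ν : Finset (Fin n) → ℝ,
        (∀ S, 0 ≤ ν S) → (∀ S, ν S ≠ 0 → S.card = k) →
        (∑ S : Finset (Fin n), ν S = 1) →
        (∀ S, extField μ lam S = 0 → ν S = 0) →
        KLdiv (down1 k ν) (down1 k (extField μ lam)) ≤
          (1 / (α * (k : ℝ))) * KLdiv ν (extField μ lam)) :
    ConcaveOn ℝ {z : Fin n → ℝ | ∀ i, 0 < z i}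
      (fun z => Real.log (genPoly μ (fun i => z i ^ α))) :=
  stmt_3_general n k α hα0 μ hμ0 hμk hμ1 hEI
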